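/- Let C be a code of length n over a finite alphabet Q of size q ≥ 2 with |C| ≥ q^k for some integer k ≥ 1, such that any two distinct codewords are at Hamming distance at least d, and suppose C is r-locally recoverable with 1 ≤ r ≤ k. Then d ≤ n − k − ⌈k/r⌉ + 2. -/

import Mathlib

/-!
For a set `S` of coordinates count the distinct restrictions of codewords to `S`. Adding a
coordinate multiplies this count by at most `q`, and adding a coordinate `i` together with its
recovery set `R` multiplies it by at most `q ^ #(R \ S)`, since the restriction to `R` determines
`X i`: one coordinate comes for free. As long as `t * r < k` the code is too large for `S` to be
everything, so `t = ⌈k / r⌉ - 1` such steps give a set `S` with at most `q ^ (#S - t)`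
restrictions. Padded to `k - 1 + t` coordinates it still has at most `q ^ (k - 1) < #C`
restrictions, so two distinct codewords agree there, and `d ≤ n - (k - 1 + t)`.
-/

open Finset

theorem Finset.card_image_le_card_image_of_determined {α β γ : Type*} [DecidableEq β]
    [DecidableEq γ] {s : Finset α} {f : α → β} {g : α → γ}
    (h : ∀ x ∈ s, ∀ y ∈ s, f x = f y → g x = g y) : #(s.image g) ≤ #(s.image f) := by
  set fg := s.image fun x => (f x, g x)
  have hfst : Set.InjOn Prod.fst (fg : Set (β × γ)) := by
    simp only [fg, coe_image]
    rintro _ ⟨x, hx, rfl⟩ _ ⟨y, hy, rfl⟩ hxy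
    exact Prod.ext hxy (h x hx y hy hxy)
  calc #(s.image g) = #(fg.image Prod.snd) := by rw [image_image]; rfl
    _ ≤ #fg := card_image_le
    _ = #(fg.image Prod.fst) := (card_image_of_injOn hfst).symm
    _ = #(s.image f) := by rw [image_image]; rfl

theorem ceil_natCast_div_natCast_eq_pred_div_add_one {k r : ℕ} (hk : 1 ≤ k) (hr : 1 ≤ r) :
    ⌈(k : ℚ) / r⌉ = ((k - 1) / r : ℕ) + 1 := by
  have hrQ : (0 : ℚ) < r := by exact_mod_cast hr
  have hlow : (k - 1) / r * r < k := by have := Nat.div_mul_le_self (k - 1) r; omega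
  have hhigh : k ≤ ((k - 1) / r + 1) * r := by
    have := Nat.lt_div_mul_add (a := k - 1) (b := r) hr; rw [Nat.add_mul]; omega
  generalize (k - 1) / r = m at hlow hhigh ⊢
  rw [Int.ceil_eq_iff, lt_div_iff₀ hrQ, div_le_iff₀ hrQ]
  push_cast
  constructor
  · have : (m : ℚ) * r < k := by exact_mod_cast hlow
    linarith
  · exact_mod_cast hhigh

namespace Code

variable {ι Q : Type*} [Fintype ι] [DecidableEq ι]

/-- Restriction to `S`, with `none` at the forgotten coordinates so that no default letter is
needed. -/
def proj (S : Finset ι) (X : ι → Q) : ι → Option Q :=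
  fun i => if i ∈ S then some (X i) else none

omit [Fintype ι] in
theorem proj_eq_proj_iff {S : Finset ι} {X Y : ι → Q} :
    proj S X = proj S Y ↔ ∀ i ∈ S, X i = Y i := by
  simp only [funext_iff, proj]
  refine ⟨fun h i hi => by simpa [hi] using h i, fun h i => ?_⟩
  split_ifs with hi
  · rw [h i hi]
  · rfl

def IsLocallyRecoverable (C : Finset (ι → Q)) (r : ℕ) : Prop :=
  ∀ i, ∃ R : Finset ι, i ∉ R ∧ #R = r ∧ ∀ X ∈ C, ∀ Y ∈ C, X i ≠ Y i → ∃ j ∈ R, X j ≠ Y j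

variable [DecidableEq Q] {C : Finset (ι → Q)}

def projCard (C : Finset (ι → Q)) (S : Finset ι) : ℕ := #(C.image (proj S))

theorem projCard_univ (C : Finset (ι → Q)) : projCard C univ = #C :=
  card_image_of_injective _ fun _ _ h => funext fun i => proj_eq_proj_iff.mp h i (mem_univ i)

theorem projCard_empty_le_one (C : Finset (ι → Q)) : projCard C ∅ ≤ 1 :=
  card_le_one.mpr <| by
    simp only [mem_image]
    rintro _ ⟨_, -, rfl⟩ _ ⟨_, -, rfl⟩
    exact proj_eq_proj_iff.mpr (by simp)

theorem projCard_insert_le_of_determined {S : Finset ι} {i : ι}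
    (h : ∀ X ∈ C, ∀ Y ∈ C, (∀ j ∈ S, X j = Y j) → X i = Y i) :
    projCard C (insert i S) ≤ projCard C S := by
  refine card_image_le_card_image_of_determined fun X hX Y hY hXY => ?_
  rw [proj_eq_proj_iff] at hXY ⊢
  intro j hj
  rcases mem_insert.mp hj with rfl | hj
  exacts [h X hX Y hY hXY, hXY j hj]

theorem le_card_sub_of_projCard_lt {S : Finset ι} {d : ℕ}
    (hdist : ∀ X ∈ C, ∀ Y ∈ C, X ≠ Y → d ≤ hammingDist X Y) (h : projCard C S < #C) :
    d ≤ Fintype.card ι - #S := by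
  obtain ⟨X, hX, Y, hY, hXY, hproj⟩ :=
    exists_ne_map_eq_of_card_lt_of_maps_to h fun X hX => mem_image_of_mem (proj S) hX
  have hdiff : filter (fun i => X i ≠ Y i) univ ⊆ Sᶜ := fun i hi =>
    mem_compl.mpr fun hiS => (mem_filter.mp hi).2 (proj_eq_proj_iff.mp hproj i hiS)
  calc d ≤ hammingDist X Y := hdist X hX Y hY hXY
    _ ≤ #Sᶜ := card_le_card hdiff
    _ = Fintype.card ι - #S := card_compl S

variable [Fintype Q]

theorem projCard_insert_le (S : Finset ι) (i : ι) :
    projCard C (insert i S) ≤ projCard C S * Fintype.card Q := by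
  calc projCard C (insert i S) ≤ #(C.image fun X => (proj S X, X i)) := by
        refine card_image_le_card_image_of_determined fun X _ Y _ hXY => ?_
        simp only [Prod.mk.injEq, proj_eq_proj_iff] at hXY ⊢
        intro j hj
        rcases mem_insert.mp hj with rfl | hj
        exacts [hXY.2, hXY.1 j hj]
    _ ≤ #(C.image (proj S) ×ˢ (univ : Finset Q)) :=
        card_le_card <| image_subset_iff.mpr fun X hX =>
          mem_product.mpr ⟨mem_image_of_mem _ hX, mem_univ _⟩
    _ = projCard C S * Fintype.card Q := by rw [card_product, card_univ]; rfl

theorem projCard_union_le (S U : Finset ι) :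
    projCard C (S ∪ U) ≤ projCard C S * Fintype.card Q ^ #U := by
  induction U using Finset.induction_on with
  | empty => simp
  | insert a U ha ih =>
    rw [union_insert, card_insert_of_notMem ha, pow_succ, ← mul_assoc]
    exact (projCard_insert_le _ a).trans (Nat.mul_le_mul_right _ ih)

theorem projCard_mul_pow_le_of_subset {S T : Finset ι} {j : ℕ} (hST : S ⊆ T)
    (h : projCard C S * Fintype.card Q ^ j ≤ Fintype.card Q ^ #S) :
    projCard C T * Fintype.card Q ^ j ≤ Fintype.card Q ^ #T := by
  set q := Fintype.card Q
  have hT := projCard_union_le (C := C) S (T \ S)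
  rw [union_sdiff_of_subset hST] at hT
  calc projCard C T * q ^ j ≤ projCard C S * q ^ #(T \ S) * q ^ j := by gcongr
    _ = projCard C S * q ^ j * q ^ #(T \ S) := by ring
    _ ≤ q ^ #S * q ^ #(T \ S) := by gcongr
    _ = q ^ #T := by rw [← pow_add, add_comm, card_sdiff_add_card_eq_card hST]

theorem add_le_card_of_pow_le_projCard {S : Finset ι} {j k : ℕ} (hq : 1 < Fintype.card Q)
    (hk : Fintype.card Q ^ k ≤ projCard C S)
    (h : projCard C S * Fintype.card Q ^ j ≤ Fintype.card Q ^ #S) : k + j ≤ #S := by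
  rw [← Nat.pow_le_pow_iff_right hq, pow_add]
  exact (Nat.mul_le_mul_right _ hk).trans h

namespace IsLocallyRecoverable

variable {r : ℕ}

theorem exists_projCard_le (hC : IsLocallyRecoverable C r) {S : Finset ι} {i : ι} (hi : i ∉ S) :
    ∃ T : Finset ι, ∃ m ≤ r, #T = #S + m + 1 ∧
      projCard C T ≤ projCard C S * Fintype.card Q ^ m := by
  obtain ⟨R, hiR, hR, hrec⟩ := hC i
  refine ⟨insert i (S ∪ R), #(R \ S), hR ▸ card_le_card sdiff_subset, ?_, ?_⟩
  · rw [card_insert_of_notMem (by simp [hi, hiR]), ← union_sdiff_self_eq_union,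
      card_union_of_disjoint disjoint_sdiff]
  · have hdet : ∀ X ∈ C, ∀ Y ∈ C, (∀ j ∈ S ∪ R, X j = Y j) → X i = Y i := by
      intro X hX Y hY hXY
      by_contra hne
      obtain ⟨j, hjR, hj⟩ := hrec X hX Y hY hne
      exact hj (hXY j (mem_union_right S hjR))
    calc projCard C (insert i (S ∪ R)) ≤ projCard C (S ∪ R) :=
          projCard_insert_le_of_determined hdet
      _ ≤ projCard C S * Fintype.card Q ^ #(R \ S) := by
          rw [← union_sdiff_self_eq_union]; exact projCard_union_le S (R \ S)

theorem exists_projCard_mul_pow_le (hC : IsLocallyRecoverable C r) {k : ℕ}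
    (hq : 1 < Fintype.card Q) (hCk : Fintype.card Q ^ k ≤ #C) :
    ∀ j, j * r < k → ∃ S : Finset ι, #S ≤ j * (r + 1) ∧
      projCard C S * Fintype.card Q ^ j ≤ Fintype.card Q ^ #S := by
  set q := Fintype.card Q
  intro j
  induction j with
  | zero => exact fun _ => ⟨∅, by simp, by simpa using projCard_empty_le_one C⟩
  | succ j ih =>
    intro hj
    rw [Nat.succ_mul] at hj
    obtain ⟨S, hScard, hS⟩ := ih (by omega)
    obtain ⟨i, hi⟩ : ∃ i, i ∉ S := by
      by_contra! hSuniv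
      obtain rfl : S = univ := eq_univ_iff_forall.mpr hSuniv
      have := add_le_card_of_pow_le_projCard hq (by rwa [projCard_univ]) hS
      rw [Nat.mul_succ] at hScard
      omega
    obtain ⟨T, m, hm, hTcard, hT⟩ := hC.exists_projCard_le hi
    refine ⟨T, by rw [hTcard, Nat.succ_mul]; omega, ?_⟩
    calc projCard C T * q ^ (j + 1) ≤ projCard C S * q ^ m * q ^ (j + 1) := by gcongr
      _ = projCard C S * q ^ j * q ^ (m + 1) := by ring
      _ ≤ q ^ #S * q ^ (m + 1) := by gcongr
      _ = q ^ #T := by rw [hTcard, ← pow_add, add_assoc]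

theorem add_pred_add_pred_div_le_card (hC : IsLocallyRecoverable C r) {k d : ℕ}
    (hq : 1 < Fintype.card Q) (hk : 1 ≤ k) (hCk : Fintype.card Q ^ k ≤ #C)
    (hdist : ∀ X ∈ C, ∀ Y ∈ C, X ≠ Y → d ≤ hammingDist X Y) :
    d + (k - 1) + (k - 1) / r ≤ Fintype.card ι := by
  set q := Fintype.card Q
  have htr : (k - 1) / r * r < k := by have := Nat.div_mul_le_self (k - 1) r; omega
  set t := (k - 1) / r
  obtain ⟨S₀, hS₀card, hS₀⟩ := hC.exists_projCard_mul_pow_le hq hCk t htr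
  have hkt : k + t ≤ Fintype.card ι := by
    have huniv := projCard_mul_pow_le_of_subset (subset_univ S₀) hS₀
    simpa using add_le_card_of_pow_le_projCard hq (by rwa [projCard_univ]) huniv
  rw [Nat.mul_succ] at hS₀card
  obtain ⟨S, hS₀S, hScard⟩ := exists_superset_card_eq (s := S₀) (n := k - 1 + t)
    (by omega) (by omega)
  have hS : projCard C S < #C := by
    have h := projCard_mul_pow_le_of_subset hS₀S hS₀
    rw [hScard, pow_add] at h
    calc projCard C S ≤ q ^ (k - 1) := Nat.le_of_mul_le_mul_right h (by positivity)
      _ < q ^ k := Nat.pow_lt_pow_right hq (by omega)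
      _ ≤ #C := hCk
  have := le_card_sub_of_projCard_lt hdist hS
  omega

end IsLocallyRecoverable

end Code

theorem stmt_3_general (n q d r k : ℕ) (hq : 2 ≤ q) (hk : 1 ≤ k) (hr : 1 ≤ r)
    (Q : Type) [Fintype Q] [DecidableEq Q] (hcard : Fintype.card Q = q)
    (C : Finset (Fin n → Q)) (hCcard : q ^ k ≤ C.card)
    (hdist : ∀ X ∈ C, ∀ Y ∈ C, X ≠ Y → d ≤ hammingDist X Y)
    (hloc : ∀ i : Fin n, ∃ R : Finset (Fin n), i ∉ R ∧ R.card = r ∧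
      ∀ X ∈ C, ∀ Y ∈ C, X i ≠ Y i → ∃ j ∈ R, X j ≠ Y j) :
    (d : ℤ) ≤ (n : ℤ) - (k : ℤ) - ⌈(k : ℚ) / (r : ℚ)⌉ + 2 := by
  subst hcard
  have hC : Code.IsLocallyRecoverable (ι := Fin n) C r := hloc
  have hbound : d + (k - 1) + (k - 1) / r ≤ n := by
    simpa using hC.add_pred_add_pred_div_le_card (by omega) hk hCcard hdist
  rw [ceil_natCast_div_natCast_eq_pred_div_add_one hk hr]
  omega

/-- The Gopalan et al. generalized Singleton bound: a code with
`|C| ≥ q^k` codewords (`q ≥ 2`, `1 ≤ k`), minimum distance `d`, and locality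
`1 ≤ r ≤ k` satisfies `d ≤ n - k - ⌈k/r⌉ + 2`. -/
theorem stmt_3 (n q d r k : ℕ) (hq : 2 ≤ q) (hk : 1 ≤ k) (hr : 1 ≤ r) (hrk : r ≤ k)
    (Q : Type) [Fintype Q] [DecidableEq Q] (hcard : Fintype.card Q = q)
    (C : Finset (Fin n → Q)) (hCcard : q ^ k ≤ C.card)
    (hdist : ∀ X ∈ C, ∀ Y ∈ C, X ≠ Y → d ≤ hammingDist X Y)
    (hloc : ∀ i : Fin n, ∃ R : Finset (Fin n), i ∉ R ∧ R.card = r ∧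
      ∀ X ∈ C, ∀ Y ∈ C, X i ≠ Y i → ∃ j ∈ R, X j ≠ Y j) :
    (d : ℤ) ≤ (n : ℤ) - (k : ℤ) - ⌈(k : ℚ) / (r : ℚ)⌉ + 2 :=
  stmt_3_general n q d r k hq hk hr Q hcard C hCcard hdist hloc
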